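/- arXiv:1701.02516 — 4 statements merged into one kernel-verified Lean document; each statement's English description precedes it below -/
import Mathlib

section
/- Explicit rectification of s_{(n,α)} (Lemma 1.1, nonzero case): let α = (α_1 ≥ ⋯ ≥ α_l > 0) be a partition and k ≥ 0 an integer. Set m := #{i : α_i > k}, define β = (β_1, …, β_l) by β_i = α_i − 1 if α_i > k and β_i = α_i otherwise (β is a partition), and let μ be the partition obtained by inserting one additional part equal to k into β (sorting the multiset of parts of β together with k into weakly decreasing order). Then in any number of variables, s_{(k − m, α_1, …, α_l)} = (−1)^m · s_μ, and |μ| = |α| + k − m. Equivalently, μ is obtained from α by removing one cell from each row with α_i > k (a vertical strip of size m) and adding one cell to each of the first k columns (a horizontal strip of size k). -/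
/-! The rows with `α i > k` form an initial segment of length `c`, so `μ` is `β` with `k`
inserted at position `c`, i.e. `μ = (α₁ - 1, …, α_c - 1, k, α_{c+1}, …, α_l)`.
Row `i` of a Jacobi–Trudi matrix depends only on `αᵢ - i`, and for `(k - c, α)` these shifted
parts are those of `μ` with the `c`-th one moved to the front; the determinants therefore
differ by the sign `(-1)^c` of a `(c+1)`-cycle. -/

open MvPolynomial

/-- The complete homogeneous symmetric polynomial `h_k` indexed by an integer,
with the convention `h_0 = 1` and `h_k = 0` for `k < 0`. -/
noncomputable def hInt (σ : Type*) [Fintype σ] [DecidableEq σ] (R : Type*) [CommRing R]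
    (k : ℤ) : MvPolynomial σ R :=
  if 0 ≤ k then hsymm σ R k.toNat else 0

/-- The Jacobi–Trudi polynomial `s_α = det (h_{α_i + j - i})` of an arbitrary integer
sequence `α`, in the variables indexed by `σ`. -/
noncomputable def jacobiTrudi (σ : Type*) [Fintype σ] [DecidableEq σ] (R : Type*) [CommRing R]
    {l : ℕ} (α : Fin l → ℤ) : MvPolynomial σ R :=
  Matrix.det (Matrix.of fun i j : Fin l => hInt σ R (α i + (j : ℕ) - (i : ℕ)))

open Finset

theorem Fin.eq_of_antitone_of_map_univ_eq {α : Type*} [LinearOrder α] {n : ℕ}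
    {f g : Fin n → α} (hf : Antitone f) (hg : Antitone g)
    (h : univ.val.map f = univ.val.map g) : f = g := by
  have hf' : (List.ofFn f).Pairwise (· ≥ ·) := List.pairwise_ofFn.2 fun _ _ hij => hf hij.le
  have hg' : (List.ofFn g).Pairwise (· ≥ ·) := List.pairwise_ofFn.2 fun _ _ hij => hg hij.le
  rw [Fin.univ_val_map, Fin.univ_val_map, Multiset.coe_eq_coe] at h
  exact List.ofFn_injective (h.eq_of_pairwise' hf' hg')

theorem Fin.map_univ_val_insertNth {α : Type*} {n : ℕ} (p : Fin (n + 1)) (x : α)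
    (f : Fin n → α) : univ.val.map (Fin.insertNth p x f) = x ::ₘ univ.val.map f := by
  rw [Fin.univ_succAbove n p]
  simp

theorem Fin.antitone_insertNth {α : Type*} [Preorder α] {n : ℕ} {p : Fin (n + 1)} {x : α}
    {f : Fin n → α} (hf : Antitone f) (hlt : ∀ i, i.castSucc < p → x ≤ f i)
    (hge : ∀ i, p ≤ i.castSucc → f i ≤ x) : Antitone (Fin.insertNth p x f) := by
  intro i j hij
  cases i using Fin.succAboveCases p with
  | x =>
    cases j using Fin.succAboveCases p with
    | x => rfl
    | p j =>
      have hpj := lt_of_le_of_ne hij (Fin.succAbove_ne p j).symm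
      simpa using hge j ((Fin.lt_succAbove_iff_le_castSucc p j).1 hpj)
  | p i =>
    cases j using Fin.succAboveCases p with
    | x =>
      have hip := lt_of_le_of_ne hij (Fin.succAbove_ne p i)
      simpa using hlt i ((Fin.succAbove_lt_iff_castSucc_lt p i).1 hip)
    | p j => simpa using hf (Fin.succAbove_le_succAbove_iff.1 hij)

theorem Fin.lt_card_filter_iff {n : ℕ} {P : Fin n → Prop} [DecidablePred P]
    (hP : ∀ ⦃i j⦄, i ≤ j → P j → P i) (i : Fin n) : P i ↔ (i : ℕ) < #(univ.filter P) := by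
  constructor
  · intro hi
    have := card_le_card fun j (hj : j ∈ Iic i) =>
      show j ∈ univ.filter P from (mem_filter_univ _).2 (hP (mem_Iic.1 hj) hi)
    rw [Fin.card_Iic] at this
    omega
  · intro hi
    by_contra hni
    have := card_le_card fun j (hj : j ∈ univ.filter P) =>
      mem_Iio.2 (lt_of_not_ge fun hij => hni (hP hij ((mem_filter_univ _).1 hj)))
    rw [Fin.card_Iio] at this
    omega

theorem Fin.sum_ite_castSucc_lt_sub_one {l : ℕ} (p : Fin (l + 1)) (f : Fin l → ℤ) :
    ∑ i, (if i.castSucc < p then f i - 1 else f i) = ∑ i, f i - p := by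
  have hterm : ∀ i : Fin l, (if i.castSucc < p then f i - 1 else f i) =
      f i - if (i : ℕ) < p then 1 else 0 := fun i => by
    simp only [Fin.lt_def, Fin.val_castSucc]
    split_ifs <;> ring
  simp only [hterm, sum_sub_distrib, sum_boole, Fin.card_filter_val_lt,
    min_eq_right (Nat.lt_succ_iff.1 p.isLt)]

section JacobiTrudi

variable (σ : Type*) [Fintype σ] [DecidableEq σ] (R : Type*) [CommRing R]

theorem jacobiTrudi_eq_sign_smul {n : ℕ} {α γ : Fin n → ℤ} (q : Equiv.Perm (Fin n))
    (h : ∀ i, α i - i = γ (q i) - q i) :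
    jacobiTrudi σ R α = (Equiv.Perm.sign q : ℤ) • jacobiTrudi σ R γ := by
  rw [jacobiTrudi, jacobiTrudi, zsmul_eq_mul, ← Matrix.det_permute]
  refine congrArg Matrix.det (Matrix.ext fun i j => ?_)
  simp only [Matrix.of_apply, Matrix.submatrix_apply, id]
  congr 1
  linarith [h i]

theorem jacobiTrudi_cons_sub_eq {l : ℕ} (a : ℤ) (α : Fin l → ℤ) (p : Fin (l + 1)) :
    jacobiTrudi σ R (Fin.cons (a - p) α) = (-1) ^ (p : ℕ) •
      jacobiTrudi σ R (Fin.insertNth p a fun i => if i.castSucc < p then α i - 1 else α i) := by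
  rw [jacobiTrudi_eq_sign_smul σ R p.cycleRange.symm, Equiv.Perm.sign_symm, Fin.sign_cycleRange]
  · push_cast
    rfl
  intro i
  rw [Fin.insertNth_apply_cycleRange_symm]
  cases i using Fin.cases with
  | zero => simp
  | succ i =>
    simp only [Fin.cons_succ, Fin.cycleRange_symm_succ]
    split_ifs with h
    · simp [Fin.succAbove_of_castSucc_lt p i h]
      ring
    · simp [Fin.succAbove_of_le_castSucc p i (not_lt.1 h)]

end JacobiTrudi

theorem jacobiTrudi_prepend_rectification_general (R : Type*) [CommRing R] (m l : ℕ)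
    (α : Fin l → ℕ) (hα : Antitone α) (k : ℕ)
    (c : ℕ) (hc : c = (Finset.univ.filter fun i : Fin l => k < α i).card)
    (β : Fin l → ℕ) (hβ : ∀ i, β i = if k < α i then α i - 1 else α i)
    (μ : Fin (l + 1) → ℕ) (hμdec : Antitone μ)
    (hμ : Multiset.map μ Finset.univ.val = k ::ₘ Multiset.map β Finset.univ.val) :
    Antitone β ∧
    jacobiTrudi (Fin m) R (Fin.cons ((k : ℤ) - (c : ℤ)) (fun i => (α i : ℤ))) =
      ((-1 : ℤ) ^ c) • jacobiTrudi (Fin m) R (fun i => (μ i : ℤ)) ∧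
    (∑ i : Fin (l + 1), (μ i : ℤ)) = (∑ i : Fin l, (α i : ℤ)) + (k : ℤ) - (c : ℤ) := by
  set p : Fin (l + 1) := ⟨c, hc ▸ Nat.lt_succ_of_le ((card_filter_le _ _).trans (card_fin l).le)⟩
  have hcut : ∀ i : Fin l, k < α i ↔ i.castSucc < p := fun i =>
    (Fin.lt_card_filter_iff (fun _ _ hij (h : k < _) => h.trans_le (hα hij)) i).trans
      (hc ▸ Iff.rfl)
  have hβ_anti : Antitone β := by
    intro i j hij
    have := hα hij
    rw [hβ i, hβ j]
    split_ifs <;> omega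
  have hμ_eq : μ = Fin.insertNth p k β := by
    refine Fin.eq_of_antitone_of_map_univ_eq hμdec
      (Fin.antitone_insertNth hβ_anti (fun i hi => ?_) (fun i hi => ?_))
      (hμ.trans (Fin.map_univ_val_insertNth p k β).symm)
    · have hk := (hcut i).2 hi
      rw [hβ i, if_pos hk]
      omega
    · have hk := mt (hcut i).1 (not_lt.2 hi)
      rw [hβ i, if_neg hk]
      exact not_lt.1 hk
  have hμ_int : (fun i => (μ i : ℤ)) =
      Fin.insertNth p (k : ℤ) fun i => if i.castSucc < p then (α i : ℤ) - 1 else α i := by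
    funext i
    rw [hμ_eq]
    cases i using Fin.succAboveCases p with
    | x => simp
    | p i =>
      simp only [Fin.insertNth_apply_succAbove, hβ i, ← hcut i]
      split_ifs <;> omega
  refine ⟨hβ_anti, ?_, ?_⟩
  · rw [hμ_int]
    exact jacobiTrudi_cons_sub_eq (Fin m) R k (fun i => α i) p
  · rw [hμ_int, Fin.sum_insertNth, Fin.sum_ite_castSucc_lt_sub_one]
    ring

/-- **Explicit rectification of `s_{(n,α)}`, nonzero case.**  Let `α` be a partition with
`l` positive parts, let `k ≥ 0`, let `c = #{i : α_i > k}`, let `β` be obtained from `α` by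
removing one cell from each row with `α_i > k`, and let `μ` be the partition obtained by
inserting an additional part equal to `k` into `β`.  Then `β` is a partition,
`s_{(k - c, α)} = (-1)^c ⬝ s_μ`, and `|μ| = |α| + k - c`. -/
theorem jacobiTrudi_prepend_rectification (R : Type*) [CommRing R] (m l : ℕ)
    (α : Fin l → ℕ) (hα : Antitone α) (hpos : ∀ i, 0 < α i) (k : ℕ)
    (c : ℕ) (hc : c = (Finset.univ.filter fun i : Fin l => k < α i).card)
    (β : Fin l → ℕ) (hβ : ∀ i, β i = if k < α i then α i - 1 else α i)
    (μ : Fin (l + 1) → ℕ) (hμdec : Antitone μ)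
    (hμ : Multiset.map μ Finset.univ.val = k ::ₘ Multiset.map β Finset.univ.val) :
    Antitone β ∧
    jacobiTrudi (Fin m) R (Fin.cons ((k : ℤ) - (c : ℤ)) (fun i => (α i : ℤ))) =
      ((-1 : ℤ) ^ c) • jacobiTrudi (Fin m) R (fun i => (μ i : ℤ)) ∧
    (∑ i : Fin (l + 1), (μ i : ℤ)) = (∑ i : Fin l, (α i : ℤ)) + (k : ℤ) - (c : ℤ) :=
  jacobiTrudi_prepend_rectification_general R m l α hα k c hc β hβ μ hμdec hμ
end

section
/- Branching rule for one extra variable: let λ be a partition with ℓ(λ) ≤ m + 1. Then in the polynomial ring with variables x_1, …, x_m, y: s_λ(x_1, …, x_m, y) = Σ_μ y^{|λ| − |μ|} · s_μ(x_1, …, x_m), where the sum ranges over all partitions μ ⊆ λ such that λ/μ is a horizontal strip. -/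
open MvPolynomial

open scoped Classical

/-- `λ/μ` is a horizontal strip: `μ ⊆ λ` and `λ_{i+1} ≤ μ_i` for all `i`. -/
def IsHorizontalStrip {l : ℕ} (lam μ : Fin l → ℕ) : Prop :=
  (∀ i, μ i ≤ lam i) ∧ ∀ i j : Fin l, (i : ℕ) + 1 = (j : ℕ) → lam j ≤ μ i

/-!
Splitting off the last variable gives `h_k(x, y) = Σ_{r < n} y^r h_{k-r}(x) + y^n h_{k-n}(x, y)`.
Cutting row `i` of the Jacobi–Trudi matrix at `n = λ_i - λ_{i+1} + 1` leaves a remainder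
equal to `y^n` times row `i + 1`; so, working from the top row down, row operations replace
every row by its truncation without changing the determinant (the last row has no remainder,
as `h` vanishes in negative degree). Expanding the truncated determinant multilinearly gives
one term `y^{|λ| - |μ|} s_μ(x)` for each `μ` with `λ_{i+1} ≤ μ_i ≤ λ_i`, i.e. for each
horizontal strip `λ/μ`.
-/

open Finset

namespace MvPolynomial

variable {R : Type*} [CommSemiring R]

theorem hsymm_option_succ (σ : Type*) [Fintype σ] [DecidableEq σ] (n : ℕ) :
    hsymm (Option σ) R (n + 1) =
      rename some (hsymm σ R (n + 1)) + X none * hsymm (Option σ) R n := by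
  rw [hsymm, ← symOptionSuccEquiv.symm.sum_comp, Fintype.sum_sum_type, add_comm]
  congr 1
  · rw [hsymm, map_sum]
    refine Fintype.sum_congr _ _ fun s => ?_
    simp [symOptionSuccEquiv, Sym.map, map_multiset_prod, Multiset.map_map]
  · rw [hsymm, mul_sum]
    refine Fintype.sum_congr _ _ fun s => ?_
    simp [symOptionSuccEquiv, Sym.cons, Multiset.map_cons]

theorem hsymm_fin_succ (m n : ℕ) :
    hsymm (Fin (m + 1)) R (n + 1) =
      rename Fin.castSucc (hsymm (Fin m) R (n + 1)) + X (Fin.last m) * hsymm (Fin (m + 1)) R n := by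
  have hren : ∀ k, hsymm (Fin (m + 1)) R k =
      rename finSuccEquivLast.symm (hsymm (Option (Fin m)) R k) :=
    fun k => (rename_hsymm _ _ k _).symm
  rw [hren, hren, hsymm_option_succ, map_add, map_mul, rename_rename, rename_X]
  congr 3
  funext i
  simp

end MvPolynomial

namespace Matrix

variable {S : Type*} [CommRing S]

theorem det_sum_smul_rows {n ι : Type*} [Fintype n] [DecidableEq n] [DecidableEq ι]
    (s : n → Finset ι) (c : n → ι → S) (w : n → ι → n → S) :
    det (of fun i => ∑ a ∈ s i, c i a • w i a) =
      ∑ a ∈ Fintype.piFinset s, (∏ i, c i (a i)) * det (of fun i => w i (a i)) := by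
  change detRowAlternating.toMultilinearMap (fun i => ∑ a ∈ s i, c i a • w i a) = _
  rw [MultilinearMap.map_sum_finset]
  refine sum_congr rfl fun a _ => ?_
  exact detRowAlternating.toMultilinearMap.map_smul_univ _ _

theorem det_eq_of_row_eq_add_smul_succ {n : ℕ} {V T : Matrix (Fin (n + 1)) (Fin (n + 1)) S}
    (c : Fin n → S) (hrow : ∀ i : Fin n, V i.castSucc = T i.castSucc + c i • V i.succ)
    (hlast : V (Fin.last n) = T (Fin.last n)) : V.det = T.det := by
  let N : Matrix (Fin (n + 1)) (Fin (n + 1)) S :=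
    of fun i k => if (i : ℕ) + 1 = k then Fin.snoc (α := fun _ => S) c 0 i else 0
  have hN : T = (1 - N) * V := by
    rw [sub_mul, one_mul, eq_sub_iff_add_eq]
    ext i j
    induction i using Fin.lastCases with
    | last => simp [N, mul_apply, hlast, show ∀ k : Fin (n + 1), n + 1 ≠ k by omega]
    | cast t =>
      rw [add_apply, hrow, Pi.add_apply, Pi.smul_apply, mul_apply, sum_eq_single t.succ]
      · simp [N]
      · intro k _ hk
        simp [N, show (t : ℕ) + 1 ≠ k by intro h; exact hk (Fin.ext (by simp [h]))]
      · simp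
  have hunit : (1 - N).det = 1 := by
    rw [det_of_isUpperTriangular]
    · simp [N]
    · intro i k (hki : k < i)
      simp [N, one_apply_ne hki.ne', show (i : ℕ) + 1 ≠ k by omega]
  rw [hN, det_mul, hunit, one_mul]

end Matrix

section

variable {R : Type*} [CommRing R] {m : ℕ}

theorem hInt_of_neg {σ : Type*} [Fintype σ] [DecidableEq σ] {k : ℤ} (hk : k < 0) :
    hInt σ R k = 0 :=
  if_neg hk.not_ge

theorem hInt_fin_succ (k : ℤ) :
    hInt (Fin (m + 1)) R k =
      rename Fin.castSucc (hInt (Fin m) R k) + X (Fin.last m) * hInt (Fin (m + 1)) R (k - 1) := by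
  rcases lt_trichotomy k 0 with hk | rfl | hk
  · rw [hInt_of_neg hk, hInt_of_neg hk, hInt_of_neg (by omega), map_zero, mul_zero, add_zero]
  · simp [hInt, hsymm_zero]
  · obtain ⟨n, rfl⟩ : ∃ n : ℕ, k = n + 1 := ⟨k.toNat - 1, by omega⟩
    simp only [hInt, add_sub_cancel_right, if_pos (show (0 : ℤ) ≤ n + 1 by omega),
      if_pos (show (0 : ℤ) ≤ n by omega)]
    exact_mod_cast hsymm_fin_succ m n

theorem hInt_eq_sum_range_add (k : ℤ) (n : ℕ) :
    hInt (Fin (m + 1)) R k =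
      ∑ r ∈ range n, X (Fin.last m) ^ r * rename Fin.castSucc (hInt (Fin m) R (k - r)) +
        X (Fin.last m) ^ n * hInt (Fin (m + 1)) R (k - n) := by
  induction n with
  | zero => simp
  | succ n ih =>
    rw [ih, hInt_fin_succ (k - n), sum_range_succ]
    push_cast
    ring_nf

theorem hInt_eq_sum_Icc_add {lo hi : ℕ} (h : lo ≤ hi) (c : ℤ) :
    hInt (Fin (m + 1)) R (hi + c) =
      ∑ μ ∈ Icc lo hi,
          X (Fin.last m) ^ (hi - μ) * rename Fin.castSucc (hInt (Fin m) R (μ + c)) +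
        X (Fin.last m) ^ (hi - lo + 1) * hInt (Fin (m + 1)) R (lo + c - 1) := by
  rw [hInt_eq_sum_range_add _ (hi - lo + 1)]
  congr 1
  · refine sum_nbij' (hi - ·) (hi - ·) ?_ ?_ ?_ ?_ fun r hr => ?_
    any_goals intro r hr; simp only [mem_range, mem_Icc] at hr ⊢; omega
    rw [mem_range] at hr
    rw [Nat.sub_sub_self (by omega), Nat.cast_sub (by omega)]
    ring_nf
  · congr 2; omega

def nextPart (lam : Fin (m + 1) → ℕ) : Fin (m + 1) → ℕ :=
  Fin.snoc (α := fun _ => ℕ) (fun t => lam t.succ) 0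

theorem filter_isHorizontalStrip_eq_piFinset (lam : Fin (m + 1) → ℕ) :
    (Iic lam).filter (fun μ => Antitone μ ∧ IsHorizontalStrip lam μ) =
      Fintype.piFinset fun i => Icc (nextPart lam i) (lam i) := by
  refine Finset.ext fun μ => ?_
  rw [mem_filter]
  simp only [mem_Iic, Fintype.mem_piFinset, mem_Icc, IsHorizontalStrip]
  constructor
  · rintro ⟨hle, -, -, hstrip⟩ i
    refine ⟨?_, hle i⟩
    induction i using Fin.lastCases with
    | last => simp [nextPart]
    | cast t => simpa [nextPart] using hstrip t.castSucc t.succ (by simp)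
  · intro hbox
    have hlower : ∀ t : Fin m, lam t.succ ≤ μ t.castSucc := fun t => by
      simpa [nextPart] using (hbox t.castSucc).1
    refine ⟨fun i => (hbox i).2, ?_, fun i => (hbox i).2, ?_⟩
    · exact Fin.antitone_iff_succ_le.2 fun t => ((hbox t.succ).2).trans (hlower t)
    · intro i j hij
      obtain ⟨t, rfl⟩ : ∃ t : Fin m, t.castSucc = i := ⟨⟨i, by omega⟩, rfl⟩
      obtain rfl : t.succ = j := Fin.ext (by simpa using hij)
      exact hlower t

theorem jacobiTrudi_eq_det_sum_Icc {lam : Fin (m + 1) → ℕ} (hlam : Antitone lam) :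
    jacobiTrudi (Fin (m + 1)) R (fun i => (lam i : ℤ)) =
      Matrix.det (Matrix.of fun i => ∑ μ ∈ Icc (nextPart lam i) (lam i),
        (X (Fin.last m) : MvPolynomial (Fin (m + 1)) R) ^ (lam i - μ) •
          fun j : Fin (m + 1) =>
            rename Fin.castSucc (hInt (Fin m) R ((μ : ℤ) + (j : ℕ) - (i : ℕ)))) := by
  refine Matrix.det_eq_of_row_eq_add_smul_succ
    (fun t => X (Fin.last m) ^ (lam t.castSucc - lam t.succ + 1)) (fun t => ?_) ?_
  · funext j
    simp only [Matrix.of_apply, Pi.add_apply, Pi.smul_apply, Finset.sum_apply, smul_eq_mul,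
      add_sub_assoc]
    rw [hInt_eq_sum_Icc_add (hlam (Fin.castSucc_le_succ t))]
    simp only [nextPart, Fin.snoc_castSucc]
    congr 3
    simp only [Fin.val_succ, Fin.val_castSucc]
    push_cast
    ring
  · funext j
    simp only [Matrix.of_apply, Finset.sum_apply, Pi.smul_apply, smul_eq_mul, add_sub_assoc,
      nextPart, Fin.snoc_last]
    rw [hInt_eq_sum_Icc_add (Nat.zero_le _), hInt_of_neg (by rw [Fin.val_last]; omega),
      mul_zero, add_zero]

end

/-- **Branching rule for one extra variable.**  For a partition `λ` with at most `m + 1`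
parts, `s_λ(x_1, …, x_m, y) = Σ_μ y^{|λ| - |μ|} s_μ(x_1, …, x_m)`, summed over all
partitions `μ ⊆ λ` such that `λ/μ` is a horizontal strip.
Here the variables are `x_i = X i.castSucc` and `y = X (Fin.last m)`. -/
theorem schur_branching_rule (R : Type*) [CommRing R] (m : ℕ)
    (lam : Fin (m + 1) → ℕ) (hlam : Antitone lam) :
    jacobiTrudi (Fin (m + 1)) R (fun i => (lam i : ℤ)) =
      ∑ μ ∈ (Finset.Iic lam).filter (fun μ => Antitone μ ∧ IsHorizontalStrip lam μ),
        (X (Fin.last m) : MvPolynomial (Fin (m + 1)) R) ^ ((∑ i, lam i) - ∑ i, μ i) *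
          rename Fin.castSucc (jacobiTrudi (Fin m) R (fun i => (μ i : ℤ))) := by
  rw [filter_isHorizontalStrip_eq_piFinset, jacobiTrudi_eq_det_sum_Icc hlam,
    Matrix.det_sum_smul_rows]
  refine sum_congr rfl fun μ hμ => ?_
  have hle : ∀ i, μ i ≤ lam i := fun i => (mem_Icc.1 (Fintype.mem_piFinset.1 hμ i)).2
  rw [prod_pow_eq_pow_sum, ← sum_tsub_distrib _ fun i _ => hle i, jacobiTrudi, AlgHom.map_det]
  rfl
end

section
/- Dual Pieri rule: let μ be a partition and r ≥ 0. Then in the variables x_1, …, x_m: e_r(x_1, …, x_m) · s_μ(x_1, …, x_m) = Σ_λ s_λ(x_1, …, x_m), where e_r denotes the elementary symmetric polynomial of degree r and the sum ranges over all partitions λ ⊇ μ such that λ/μ is a vertical strip of size r and ℓ(λ) ≤ m. -/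
open MvPolynomial

open scoped Classical

/-- `λ/μ` is a vertical strip: `λ_i - μ_i ∈ {0, 1}` for every `i`. -/
def IsVerticalStrip {l : ℕ} (lam μ : Fin l → ℕ) : Prop :=
  ∀ i, μ i ≤ lam i ∧ lam i ≤ μ i + 1

/-!
Multiplying by the Vandermonde alternant `a_δ`, `δ = (m - 1, …, 1, 0)`, turns `s_κ` into the
alternant `a_{κ + δ} = det (x_k ^ (κ_i + δ_i))`: the Jacobi–Trudi matrix times the matrix of
signed elementary symmetric polynomials in all variables but `x_k` is the alternant matrix,
because `∑_j (-1)^j e_j(x ∖ x_k) h_{n-j}(x) = x_k ^ n`. Expanding `e_r a_{ν + δ}` by Leibniz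
gives `∑_T a_{ν + 1_T + δ}` over the `r`-subsets `T` of rows; when `ν + 1_T` is not a partition
two rows of `a_{ν + 1_T + δ}` coincide, and cancelling `a_δ` (a nonzero divisor over `ℤ`) gives
the rule for partitions written with `m` parts. Other lengths are reduced to this by adding or
deleting zero parts, and `s_ν = 0` when `ν` has more than `m` nonzero parts, since then the
last column of the Jacobi–Trudi matrix is a combination of the others by
`∑_j (-1)^j e_j h_{n-j} = 0` for `n > 0`.
-/

open Finset

def addOnes {ι : Type*} [DecidableEq ι] (ν : ι → ℕ) (T : Finset ι) : ι → ℕ :=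
  fun i => ν i + if i ∈ T then 1 else 0

section AddOnes

variable {ι : Type*} [DecidableEq ι]

theorem addOnes_add (ν δ : ι → ℕ) (T : Finset ι) : addOnes (ν + δ) T = addOnes ν T + δ := by
  funext i
  simp only [addOnes, Pi.add_apply]
  ring

theorem addOnes_injective (ν : ι → ℕ) : Function.Injective (addOnes ν) := fun T T' h => by
  ext i
  have := congrFun h i
  simp only [addOnes] at this
  split_ifs at this <;> simp_all

theorem sum_addOnes_sub [Fintype ι] (ν : ι → ℕ) (T : Finset ι) :
    ∑ i, (addOnes ν T i - ν i) = #T := by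
  simp [addOnes]

end AddOnes

def zeroExtend {L : ℕ} (lam : Fin L → ℕ) (n : ℕ) : ℕ :=
  if h : n < L then lam ⟨n, h⟩ else 0

section ZeroExtend

variable {L : ℕ}

@[simp]
theorem zeroExtend_val (lam : Fin L → ℕ) (i : Fin L) : zeroExtend lam i = lam i :=
  dif_pos i.isLt

theorem zeroExtend_of_le (lam : Fin L → ℕ) {n : ℕ} (hn : L ≤ n) : zeroExtend lam n = 0 :=
  dif_neg (by omega)

theorem antitone_zeroExtend {lam : Fin L → ℕ} (h : Antitone lam) :
    Antitone (zeroExtend lam) := by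
  intro a b hab
  by_cases hb : b < L
  · simp only [zeroExtend, dif_pos hb, dif_pos (hab.trans_lt hb)]
    exact h (Fin.mk_le_mk.mpr hab)
  · rw [zeroExtend_of_le lam (not_lt.mp hb)]
    exact Nat.zero_le _

end ZeroExtend

theorem Fin.sum_univ_castLE {M : Type*} [AddCommMonoid M] {L₁ L₂ : ℕ} (h : L₁ ≤ L₂)
    (g : Fin L₂ → M) (hg : ∀ i : Fin L₂, L₁ ≤ (i : ℕ) → g i = 0) :
    ∑ i, g i = ∑ i : Fin L₁, g (Fin.castLE h i) := by
  refine (?_ : _ = ∑ i ∈ univ.map (Fin.castLEEmb h), g i).trans (sum_map _ _ _)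
  refine (sum_subset (subset_univ _) fun i _ hi => hg i ?_).symm
  by_contra hlt
  exact hi (mem_map.mpr ⟨⟨i, by omega⟩, mem_univ _, rfl⟩)

theorem Finset.sym_succ_insert {α : Type*} [DecidableEq α] (a : α) (U : Finset α) (n : ℕ) :
    (insert a U).sym (n + 1) = U.sym (n + 1) ∪ ((insert a U).sym n).image (Sym.cons a) := by
  ext s
  simp only [mem_union, mem_image, mem_sym_iff, mem_insert]
  constructor
  · intro hs
    by_cases has : a ∈ s
    · refine .inr ⟨s.erase a has, fun b hb => hs b ?_, Sym.cons_erase has⟩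
      rw [← Sym.mem_coe, Sym.coe_erase has] at hb
      exact Multiset.mem_of_mem_erase hb
    · exact .inl fun b hb => (hs b hb).resolve_left (by rintro rfl; exact has hb)
  · rintro (hs | ⟨t, ht, rfl⟩) b hb
    · exact .inr (hs b hb)
    · rcases Sym.mem_cons.mp hb with rfl | hb
      exacts [.inl rfl, ht b hb]

theorem Finset.sum_sym_insert {α M : Type*} [DecidableEq α] [AddCommMonoid M] {a : α}
    {U : Finset α} (ha : a ∉ U) (n : ℕ) (f : Sym α (n + 1) → M) :
    ∑ s ∈ (insert a U).sym (n + 1), f s =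
      ∑ s ∈ U.sym (n + 1), f s + ∑ s ∈ (insert a U).sym n, f (Sym.cons a s) := by
  have hdisj : Disjoint (U.sym (n + 1)) (((insert a U).sym n).image (Sym.cons a)) := by
    rw [disjoint_right]
    rintro _ hs hs'
    obtain ⟨t, -, rfl⟩ := mem_image.mp hs
    exact ha (mem_sym_iff.mp hs' a (Sym.mem_cons_self a t))
  rw [sym_succ_insert, sum_union hdisj, sum_image fun s _ t _ => (Sym.cons_inj_right a s t).mp]

namespace MvPolynomial

section HsymmOn

variable {σ : Type*} [DecidableEq σ] {R : Type*} [CommSemiring R]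

noncomputable def hsymmOn (U : Finset σ) (n : ℤ) : MvPolynomial σ R :=
  if 0 ≤ n then ∑ s ∈ U.sym n.toNat, (s.1.map X).prod else 0

theorem hsymmOn_of_neg {U : Finset σ} {n : ℤ} (hn : n < 0) : hsymmOn (R := R) U n = 0 :=
  if_neg (by omega)

theorem hsymmOn_natCast (U : Finset σ) (n : ℕ) :
    hsymmOn (R := R) U n = ∑ s ∈ U.sym n, (s.1.map X).prod := by
  simp [hsymmOn]

theorem hsymmOn_zero (U : Finset σ) : hsymmOn (R := R) U 0 = 1 := by
  rw [← Nat.cast_zero, hsymmOn_natCast, sym_zero, sum_singleton]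
  rfl

theorem hsymmOn_empty_of_ne_zero {n : ℤ} (hn : n ≠ 0) :
    hsymmOn (R := R) (∅ : Finset σ) n = 0 := by
  rcases lt_or_gt_of_ne hn with hn | hn
  · exact hsymmOn_of_neg hn
  · obtain ⟨k, rfl⟩ : ∃ k : ℕ, n = (k + 1 : ℕ) := ⟨n.toNat - 1, by omega⟩
    rw [hsymmOn_natCast, sym_empty, sum_empty]

theorem hsymmOn_singleton (a : σ) (n : ℕ) : hsymmOn (R := R) {a} n = X a ^ n := by
  simp [hsymmOn_natCast, sym_singleton, Sym.coe_replicate]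

theorem hsymmOn_insert {a : σ} {U : Finset σ} (ha : a ∉ U) (n : ℤ) :
    hsymmOn (R := R) (insert a U) n = hsymmOn U n + X a * hsymmOn (insert a U) (n - 1) := by
  rcases lt_trichotomy n 0 with hn | rfl | hn
  · simp [hsymmOn_of_neg hn, hsymmOn_of_neg (show n - 1 < 0 by omega)]
  · simp [hsymmOn_zero, hsymmOn_of_neg (show (-1 : ℤ) < 0 by omega)]
  · obtain ⟨k, rfl⟩ : ∃ k : ℕ, n = (k + 1 : ℕ) := ⟨n.toNat - 1, by omega⟩
    rw [Nat.cast_add_one, add_sub_cancel_right, ← Nat.cast_add_one, hsymmOn_natCast,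
      hsymmOn_natCast, hsymmOn_natCast, sum_sym_insert ha, mul_sum]
    simp [Sym.cons, Multiset.map_cons, Multiset.prod_cons]

end HsymmOn

section AltSum

variable {σ : Type*} [DecidableEq σ] {R : Type*} [CommRing R]

theorem hInt_eq_hsymmOn [Fintype σ] (n : ℤ) : hInt σ R n = hsymmOn univ n := by
  rw [hInt, hsymmOn, sym_univ]
  rfl

/-- The coefficient of `t ^ n` in `∏_{i ∈ S} (1 - X i * t) / ∏_{i ∈ U} (1 - X i * t)`. -/
noncomputable def altSum (S U : Finset σ) (n : ℤ) : MvPolynomial σ R :=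
  ∑ T ∈ S.powerset, (-1) ^ #T * (∏ i ∈ T, X i) * hsymmOn U (n - #T)

theorem altSum_empty_left (U : Finset σ) (n : ℤ) : altSum (R := R) ∅ U n = hsymmOn U n := by
  simp [altSum]

theorem altSum_insert_left {b : σ} {S : Finset σ} (hb : b ∉ S) (U : Finset σ) (n : ℤ) :
    altSum (R := R) (insert b S) U n = altSum S U n - X b * altSum S U (n - 1) := by
  rw [altSum, sum_powerset_insert hb, altSum, altSum, mul_sum, sub_eq_add_neg,
    ← sum_neg_distrib]
  congr 1
  refine sum_congr rfl fun T hT => ?_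
  have hbT : b ∉ T := fun h => hb (mem_powerset.mp hT h)
  rw [card_insert_of_notMem hbT, prod_insert hbT, Nat.cast_add_one,
    show n - (#T + 1 : ℤ) = n - 1 - #T by ring]
  ring

theorem altSum_insert_right (S : Finset σ) {b : σ} {U : Finset σ} (hb : b ∉ U) (n : ℤ) :
    altSum (R := R) S (insert b U) n = altSum S U n + X b * altSum S (insert b U) (n - 1) := by
  rw [altSum, altSum, altSum, mul_sum, ← sum_add_distrib]
  refine sum_congr rfl fun T _ => ?_
  rw [hsymmOn_insert hb, show n - #T - 1 = n - 1 - #T by ring]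
  ring

theorem altSum_insert_self {a : σ} {S : Finset σ} (ha : a ∉ S) (n : ℤ) :
    altSum (R := R) S (insert a S) n = hsymmOn {a} n := by
  induction S using Finset.induction_on generalizing n with
  | empty => rw [altSum_empty_left]; rfl
  | @insert b S hbS ih =>
    have hab : a ≠ b := fun h => ha (h ▸ mem_insert_self a S)
    have hbaS : b ∉ insert a S := by simp [hbS, Ne.symm hab]
    have hF : ∀ k, altSum (R := R) S (insert a (insert b S)) k =
        hsymmOn {a} k + X b * altSum S (insert a (insert b S)) (k - 1) := fun k => by
      rw [insert_comm, altSum_insert_right S hbaS, ih fun h => ha (mem_insert_of_mem h)]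
    rw [altSum_insert_left hbS, hF n]
    ring

theorem altSum_self (U : Finset σ) (n : ℤ) : altSum (R := R) U U n = hsymmOn ∅ n := by
  induction U using Finset.induction_on with
  | empty => exact altSum_empty_left _ _
  | @insert a S haS _ =>
    rw [altSum_insert_left haS, altSum_insert_self haS, altSum_insert_self haS,
      ← insert_empty, hsymmOn_insert (notMem_empty a)]
    ring

noncomputable def altColumn (S : Finset σ) (L : ℕ) (j : Fin L) : MvPolynomial σ R :=
  ∑ T ∈ S.powerset with #T = j.rev, (-1) ^ #T * ∏ i ∈ T, X i

theorem sum_hsymmOn_mul_altColumn {S : Finset σ} {L : ℕ} (hS : #S < L) (U : Finset σ)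
    (c : ℤ) :
    ∑ j : Fin L, hsymmOn U (c + j) * altColumn (R := R) S L j = altSum S U (c + (L - 1)) := by
  set F : Finset σ → MvPolynomial σ R :=
    fun T => (-1) ^ #T * (∏ i ∈ T, X i) * hsymmOn U (c + (L - 1) - #T)
  have hfiber : ∀ j : Fin L, hsymmOn U (c + j.rev) * altColumn (R := R) S L j.rev =
      ∑ T ∈ S.powerset with #T = j, F T := by
    intro j
    rw [altColumn, Fin.rev_rev, mul_sum]
    refine sum_congr rfl fun T hT => ?_
    simp only [F]
    rw [(mem_filter.mp hT).2, Fin.val_rev, show c + ((L - (j + 1) : ℕ) : ℤ) = c + (L - 1) - j by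
      have := j.isLt; push_cast [Nat.cast_sub this]; ring]
    ring
  rw [← Equiv.sum_comp Fin.revPerm]
  simp only [Fin.revPerm_apply, hfiber]
  rw [Fin.sum_univ_eq_sum_range (fun t => ∑ T ∈ S.powerset with #T = t, F T) L, altSum]
  exact sum_fiberwise_of_maps_to
    (fun T hT => mem_range.mpr ((card_le_card (mem_powerset.mp hT)).trans_lt hS)) _

end AltSum

noncomputable def jacobiTrudiMatrix (σ : Type*) [Fintype σ] [DecidableEq σ] (R : Type*)
    [CommRing R] {l : ℕ} (α : Fin l → ℤ) : Matrix (Fin l) (Fin l) (MvPolynomial σ R) :=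
  Matrix.of fun i j : Fin l => hInt σ R (α i + (j : ℕ) - (i : ℕ))

section JacobiTrudiMatrix

variable {σ : Type*} [Fintype σ] [DecidableEq σ] {R : Type*} [CommRing R]

theorem jacobiTrudi_eq_det {l : ℕ} (α : Fin l → ℤ) :
    jacobiTrudi σ R α = (jacobiTrudiMatrix σ R α).det :=
  rfl

theorem det_jacobiTrudiMatrix_zero (l : ℕ) : (jacobiTrudiMatrix σ R (0 : Fin l → ℤ)).det = 1 := by
  rw [Matrix.det_of_isUpperTriangular]
  · refine prod_eq_one fun i _ => ?_
    simp [jacobiTrudiMatrix, hInt, hsymm_zero]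
  · intro i j hij
    have : (j : ℕ) < i := hij
    simp only [jacobiTrudiMatrix, Matrix.of_apply, hInt, Pi.zero_apply]
    rw [if_neg (by omega)]

theorem map_hInt {S : Type*} [CommRing S] (f : R →+* S) (n : ℤ) :
    map f (hInt σ R n) = hInt σ S n := by
  unfold hInt
  split_ifs <;> simp [map_hsymm]

theorem map_jacobiTrudi {S : Type*} [CommRing S] (f : R →+* S) {l : ℕ} (α : Fin l → ℤ) :
    map f (jacobiTrudi σ R α) = jacobiTrudi σ S α := by
  rw [jacobiTrudi_eq_det, jacobiTrudi_eq_det, RingHom.map_det]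
  congr 1
  ext1 i j
  simp [jacobiTrudiMatrix, map_hInt]

theorem jacobiTrudi_castSucc {l : ℕ} (α : Fin (l + 1) → ℤ) (hα : α (Fin.last l) = 0) :
    jacobiTrudi σ R α = jacobiTrudi σ R (α ∘ Fin.castSucc) := by
  rw [jacobiTrudi_eq_det, Matrix.det_succ_row _ (Fin.last l), sum_eq_single (Fin.last l)]
  · simp [jacobiTrudiMatrix, hα, hInt, hsymm_zero, jacobiTrudi_eq_det, Matrix.submatrix]
  · intro j _ hj
    have hj' : (j : ℕ) < l := Fin.val_lt_last hj
    simp only [jacobiTrudiMatrix, Matrix.of_apply, hα, hInt, Fin.val_last]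
    rw [if_neg (by omega), mul_zero, zero_mul]
  · simp

theorem jacobiTrudi_castLE {L₁ L₂ : ℕ} (h : L₁ ≤ L₂) (α : Fin L₂ → ℤ)
    (hα : ∀ i : Fin L₂, L₁ ≤ (i : ℕ) → α i = 0) :
    jacobiTrudi σ R α = jacobiTrudi σ R (fun i => α (Fin.castLE h i)) := by
  obtain ⟨k, rfl⟩ := Nat.exists_eq_add_of_le h
  induction k with
  | zero => rfl
  | succ k ih =>
    rw [jacobiTrudi_castSucc α (hα _ (by simp)),
      ih (Nat.le_add_right L₁ k) (α ∘ Fin.castSucc) fun i hi => hα _ (by simpa using hi)]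
    rfl

theorem jacobiTrudi_restrict_of_le {L₁ L₂ : ℕ} (h : L₁ ≤ L₂) (f : ℕ → ℕ)
    (hf : ∀ n, L₁ ≤ n → f n = 0) :
    jacobiTrudi σ R (fun i : Fin L₂ => (f i : ℤ)) =
      jacobiTrudi σ R (fun i : Fin L₁ => (f i : ℤ)) :=
  jacobiTrudi_castLE h _ fun i hi => by simp [hf i hi]

theorem jacobiTrudi_eq_zero_of_card_lt {L : ℕ} (hL : Fintype.card σ < L) (α : Fin L → ℤ)
    (hα : ∀ i, 0 < α i) : jacobiTrudi σ R α = 0 := by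
  obtain ⟨n, rfl⟩ : ∃ n, L = n + 1 := ⟨L - 1, by omega⟩
  have hcol : ∀ k, ∑ j, (altColumn univ (n + 1) j : MvPolynomial σ R) •
      jacobiTrudiMatrix σ R α k j = 0 := by
    intro k
    have hsum := sum_hsymmOn_mul_altColumn (R := R) (S := (univ : Finset σ))
      (by rwa [card_univ]) univ (α k - k)
    simp only [smul_eq_mul, mul_comm (altColumn _ _ _), jacobiTrudiMatrix, Matrix.of_apply,
      hInt_eq_hsymmOn, show ∀ j : Fin (n + 1), α k + j - k = (α k - k) + j from fun j => by ring]
    rw [hsum, altSum_self, hsymmOn_empty_of_ne_zero]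
    have := hα k; have := k.isLt; push_cast; omega
  have hlast : altColumn (R := R) (univ : Finset σ) (n + 1) (Fin.last n) = 1 := by
    rw [altColumn, Fin.rev_last, Fin.val_zero, ← powersetCard_eq_filter, powersetCard_zero,
      sum_singleton]
    simp
  have hdet := Matrix.det_updateCol_sum (jacobiTrudiMatrix σ R α) (Fin.last n)
    (altColumn univ (n + 1))
  rw [hlast, one_smul, show (fun k => ∑ j, _) = 0 from _root_.funext hcol] at hdet
  rw [jacobiTrudi_eq_det, ← hdet]
  exact Matrix.det_eq_zero_of_column_eq_zero (Fin.last n) fun i => by simp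

theorem jacobiTrudi_eq_zero_of_pos {L : ℕ} {ν : Fin L → ℕ} (hν : Antitone ν) (i₀ : Fin L)
    (hi₀ : Fintype.card σ ≤ i₀) (hpos : 0 < ν i₀) :
    jacobiTrudi σ R (fun i => (ν i : ℤ)) = 0 := by
  induction L with
  | zero => exact i₀.elim0
  | succ L ih =>
    by_cases hlast : ν (Fin.last L) = 0
    · obtain ⟨j, rfl⟩ := (Fin.exists_castSucc_eq (i := i₀)).mpr fun h => by
        rw [h, hlast] at hpos; exact lt_irrefl 0 hpos
      rw [jacobiTrudi_castSucc _ (by simp [hlast])]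
      exact ih (hν.comp_monotone Fin.strictMono_castSucc.monotone) j hi₀ hpos
    · refine jacobiTrudi_eq_zero_of_card_lt (by omega) _ fun i => ?_
      have := hν (Fin.le_last i)
      omega

end JacobiTrudiMatrix

section Alternant

open Equiv

variable {R : Type*} [CommRing R] {m : ℕ}

noncomputable def alternant (β : Fin m → ℕ) : Matrix (Fin m) (Fin m) (MvPolynomial (Fin m) R) :=
  Matrix.of fun i k => X k ^ β i

def staircase (m : ℕ) : Fin m → ℕ := fun i => i.rev

theorem jacobiTrudiMatrix_mul_altColumn (κ : Fin m → ℕ) :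
    jacobiTrudiMatrix (Fin m) R (fun i => (κ i : ℤ)) *
        Matrix.of (fun j k => altColumn (univ.erase k) m j) =
      alternant (κ + staircase m) := by
  refine Matrix.ext fun i k => ?_
  have hcard : #(univ.erase k) < m := by simp [card_erase_of_mem, k.pos]
  have hshift : (κ i : ℤ) - i + (m - 1) = ((κ i + i.rev : ℕ) : ℤ) := by
    rw [Fin.val_rev]; have := i.isLt; push_cast [Nat.cast_sub this]; ring
  have hk := altSum_insert_self (R := R) (notMem_erase k univ) ((κ i : ℤ) - i + (m - 1))
  rw [insert_erase (mem_univ k)] at hk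
  simp only [jacobiTrudiMatrix, Matrix.mul_apply, Matrix.of_apply, hInt_eq_hsymmOn,
    show ∀ j : Fin m, (κ i : ℤ) + j - i = (κ i - i) + j from fun j => by ring]
  rw [sum_hsymmOn_mul_altColumn hcard, hk, hshift, hsymmOn_singleton]
  rfl

theorem det_alternant_staircase_mul_jacobiTrudi (κ : Fin m → ℕ) :
    (alternant (staircase m)).det * jacobiTrudi (Fin m) R (fun i => (κ i : ℤ)) =
      (alternant (κ + staircase m)).det := by
  have hκ := congrArg Matrix.det (jacobiTrudiMatrix_mul_altColumn (R := R) κ)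
  have h0 := congrArg Matrix.det (jacobiTrudiMatrix_mul_altColumn (R := R) (0 : Fin m → ℕ))
  simp only [Matrix.det_mul, Pi.zero_apply, Nat.cast_zero, zero_add] at hκ h0
  rw [show (fun _ : Fin m => (0 : ℤ)) = 0 from rfl, det_jacobiTrudiMatrix_zero, one_mul] at h0
  rw [← h0, ← hκ, jacobiTrudi_eq_det, mul_comm]

theorem prod_X_pow_ite_mem_perm (e : Perm (Fin m)) (T : Finset (Fin m)) :
    ∏ k, (X k : MvPolynomial (Fin m) R) ^ (if e k ∈ T then 1 else 0) =
      rename e.symm (∏ j ∈ T, X j) := by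
  have h := Equiv.prod_comp e fun j =>
    (X (e.symm j) : MvPolynomial (Fin m) R) ^ (if j ∈ T then 1 else 0)
  simp only [Equiv.symm_apply_apply] at h
  rw [h, map_prod]
  simp [rename_X, pow_ite, prod_ite_mem]

/-- In the Leibniz expansion, the extra factors contributed by the subsets `T` for the
permutation `e` add up to `rename e⁻¹ (e_r) = e_r`. -/
theorem esymm_mul_det_alternant (r : ℕ) (β : Fin m → ℕ) :
    esymm (Fin m) R r * (alternant β).det =
      ∑ T ∈ powersetCard r univ, (alternant (addOnes β T)).det := by
  simp only [Matrix.det_apply, mul_sum, alternant, Matrix.of_apply, addOnes, pow_add,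
    prod_mul_distrib, prod_X_pow_ite_mem_perm]
  rw [sum_comm]
  refine sum_congr rfl fun e _ => ?_
  simp only [← smul_sum, ← mul_sum, ← map_sum]
  rw [← esymm, esymm_isSymmetric, mul_smul_comm, mul_comm]

theorem det_alternant_eq_zero_of_not_injective {β : Fin m → ℕ}
    (hβ : ¬ Function.Injective β) : (alternant (R := R) β).det = 0 := by
  obtain ⟨i, j, hij, hne⟩ := Function.not_injective_iff.mp hβ
  exact Matrix.det_zero_of_row_eq hne (by funext k; simp [alternant, hij])

theorem not_injective_addOnes_add_staircase {ν : Fin m → ℕ} (hν : Antitone ν)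
    {T : Finset (Fin m)} (hT : ¬ Antitone (addOnes ν T)) :
    ¬ Function.Injective (addOnes ν T + staircase m) := by
  cases m with
  | zero => exact absurd (fun i => i.elim0) hT
  | succ n =>
    rw [Fin.antitone_iff_succ_le] at hT
    push Not at hT
    obtain ⟨i, hi⟩ := hT
    have hle := hν (Fin.castSucc_le_succ i)
    refine fun hinj => (Fin.castSucc_lt_succ (i := i)).ne (hinj ?_)
    simp only [addOnes, staircase, Pi.add_apply, Fin.val_rev, Fin.val_castSucc,
      Fin.val_succ] at hi hle ⊢
    split_ifs at hi ⊢ <;> omega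

theorem det_alternant_staircase_ne_zero [IsDomain R] (m : ℕ) :
    (alternant (R := R) (staircase m)).det ≠ 0 := by
  have hrev : alternant (R := R) (staircase m) =
      (Matrix.vandermonde fun k : Fin m => (X k : MvPolynomial (Fin m) R)).transpose.submatrix
        Fin.revPerm id := by
    ext1 i k
    simp [alternant, staircase, Matrix.vandermonde_apply]
  rw [hrev, Matrix.det_permute, Matrix.det_transpose]
  refine mul_ne_zero ?_ (Matrix.det_vandermonde_ne_zero_iff.mpr X_injective)
  exact (IsUnit.map (Int.castRingHom _) (Units.isUnit _)).ne_zero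

theorem esymm_mul_jacobiTrudi_int (r : ℕ) {ν : Fin m → ℕ} (hν : Antitone ν) :
    esymm (Fin m) ℤ r * jacobiTrudi (Fin m) ℤ (fun i => (ν i : ℤ)) =
      ∑ T ∈ powersetCard r univ with Antitone (addOnes ν T),
        jacobiTrudi (Fin m) ℤ (fun i => (addOnes ν T i : ℤ)) := by
  refine mul_left_cancel₀ (det_alternant_staircase_ne_zero m) ?_
  calc (alternant (staircase m)).det * (esymm (Fin m) ℤ r * jacobiTrudi (Fin m) ℤ _)
      = esymm (Fin m) ℤ r * (alternant (ν + staircase m)).det := by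
        rw [← det_alternant_staircase_mul_jacobiTrudi]; ring
    _ = ∑ T ∈ powersetCard r univ with Antitone (addOnes ν T),
          (alternant (addOnes ν T + staircase m)).det := by
        rw [esymm_mul_det_alternant, sum_filter_of_ne]
        · simp only [addOnes_add]
        · intro T _ hT
          by_contra h
          exact hT (det_alternant_eq_zero_of_not_injective
            (not_injective_addOnes_add_staircase hν (by simpa [addOnes_add] using h)))
    _ = _ := by
        rw [mul_sum]
        exact sum_congr rfl fun T _ => (det_alternant_staircase_mul_jacobiTrudi _).symm

theorem esymm_mul_jacobiTrudi (r : ℕ) {ν : Fin m → ℕ} (hν : Antitone ν) :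
    esymm (Fin m) R r * jacobiTrudi (Fin m) R (fun i => (ν i : ℤ)) =
      ∑ T ∈ powersetCard r univ with Antitone (addOnes ν T),
        jacobiTrudi (Fin m) R (fun i => (addOnes ν T i : ℤ)) := by
  have h := congrArg (map (Int.castRingHom R)) (esymm_mul_jacobiTrudi_int r hν)
  simpa only [map_mul, map_esymm, map_jacobiTrudi, map_sum] using h

end Alternant

end MvPolynomial

noncomputable def verticalStrips {L : ℕ} (ν : Fin L → ℕ) (r m : ℕ) : Finset (Fin L → ℕ) :=
  (Iic fun i => ν i + 1).filter fun lam => Antitone lam ∧ IsVerticalStrip lam ν ∧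
    (∑ i, (lam i - ν i)) = r ∧ ∀ i : Fin L, m ≤ (i : ℕ) → lam i = 0

section VerticalStrips

variable {L : ℕ}

theorem isVerticalStrip_addOnes (ν : Fin L → ℕ) (T : Finset (Fin L)) :
    IsVerticalStrip (addOnes ν T) ν := fun i => by
  simp only [addOnes]
  split_ifs <;> omega

theorem addOnes_filter_lt {ν lam : Fin L → ℕ} (h : IsVerticalStrip lam ν) :
    addOnes ν {i | ν i < lam i} = lam := by
  funext i
  have := h i
  simp only [addOnes, mem_filter, mem_univ, true_and]
  split_ifs <;> omega

theorem verticalStrips_eq_image (ν : Fin L → ℕ) (r m : ℕ) :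
    verticalStrips ν r m = ({T ∈ powersetCard r univ | Antitone (addOnes ν T) ∧
      ∀ i : Fin L, m ≤ (i : ℕ) → addOnes ν T i = 0} : Finset _).image (addOnes ν) := by
  ext lam
  simp only [verticalStrips, mem_filter, mem_Iic, mem_image, mem_powersetCard_univ]
  constructor
  · rintro ⟨-, hanti, hstrip, hsum, hzero⟩
    have hlam := addOnes_filter_lt hstrip
    refine ⟨_, ⟨?_, ?_, ?_⟩, hlam⟩
    · rw [← sum_addOnes_sub ν, hlam, hsum]
    · rwa [hlam]
    · rwa [hlam]
  · rintro ⟨T, ⟨rfl, hanti, hzero⟩, rfl⟩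
    exact ⟨fun i => (isVerticalStrip_addOnes ν T i).2, hanti, isVerticalStrip_addOnes ν T,
      sum_addOnes_sub ν T, hzero⟩

theorem eq_zero_of_mem_verticalStrips {l r m : ℕ} {ν lam : Fin L → ℕ}
    (hν : ∀ i : Fin L, l ≤ (i : ℕ) → ν i = 0) (hlam : lam ∈ verticalStrips ν r m)
    (i : Fin L) (hi : l + r ≤ (i : ℕ)) : lam i = 0 := by
  obtain ⟨-, hanti, hstrip, hsum, -⟩ := mem_filter.mp hlam
  by_contra hne
  let j₀ : Fin L := ⟨l, by omega⟩
  have hone : ∀ j ∈ Icc j₀ i, 1 ≤ lam j - ν j := fun j hj => by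
    have hj := mem_Icc.mp hj
    have := hanti hj.2
    rw [hν j hj.1]
    omega
  have := calc r + 1 ≤ #(Icc j₀ i) := by rw [Fin.card_Icc]; simp only [j₀]; omega
    _ ≤ ∑ j ∈ Icc j₀ i, (lam j - ν j) := by simpa using card_nsmul_le_sum _ _ 1 hone
    _ ≤ ∑ j, (lam j - ν j) := sum_le_sum_of_subset (subset_univ _)
  omega

end VerticalStrips

section LengthChange

variable {L₁ L₂ : ℕ} {f : ℕ → ℕ} {r m : ℕ}

theorem castLE_mem_verticalStrips (h : L₁ ≤ L₂) {lam : Fin L₂ → ℕ}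
    (hlam : lam ∈ verticalStrips (fun i : Fin L₂ => f i) r m)
    (hzero : ∀ i : Fin L₂, L₁ ≤ (i : ℕ) → lam i = 0) :
    (fun i => lam (Fin.castLE h i)) ∈ verticalStrips (fun i : Fin L₁ => f i) r m := by
  simp only [verticalStrips, mem_filter, mem_Iic, Pi.le_def] at hlam ⊢
  obtain ⟨hle, hanti, hstrip, hr, hm⟩ := hlam
  refine ⟨fun i => hle _, hanti.comp_monotone (Fin.strictMono_castLE h).monotone,
    fun i => hstrip (Fin.castLE h i), ?_, fun i hi => hm _ hi⟩
  rw [← hr, Fin.sum_univ_castLE h _ fun i hi => by simp [hzero i hi]]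
  rfl

theorem zeroExtend_mem_verticalStrips (h : L₁ ≤ L₂) (hf : ∀ n, L₁ ≤ n → f n = 0)
    {lam : Fin L₁ → ℕ} (hlam : lam ∈ verticalStrips (fun i : Fin L₁ => f i) r m) :
    (fun i : Fin L₂ => zeroExtend lam i) ∈ verticalStrips (fun i : Fin L₂ => f i) r m := by
  simp only [verticalStrips, mem_filter, mem_Iic, Pi.le_def] at hlam ⊢
  obtain ⟨hle, hanti, hstrip, hr, hm⟩ := hlam
  refine ⟨fun i => ?_, (antitone_zeroExtend hanti).comp_monotone Fin.val_strictMono.monotone,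
    fun i => ?_, ?_, fun i hi => ?_⟩
  · by_cases hi : (i : ℕ) < L₁
    · simpa [zeroExtend, hi] using hle ⟨i, hi⟩
    · simp [zeroExtend_of_le lam (not_lt.mp hi)]
  · by_cases hi : (i : ℕ) < L₁
    · simpa [zeroExtend, hi] using hstrip ⟨i, hi⟩
    · simp [zeroExtend_of_le lam (not_lt.mp hi), hf i (not_lt.mp hi)]
  · rw [← hr, Fin.sum_univ_castLE h _ fun i hi => by simp [zeroExtend_of_le lam hi, hf i hi]]
    simp
  · by_cases hi' : (i : ℕ) < L₁
    · simpa [zeroExtend, hi'] using hm ⟨i, hi'⟩ hi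
    · exact zeroExtend_of_le lam (not_lt.mp hi')

end LengthChange

namespace MvPolynomial

variable {R : Type*} [CommRing R]

theorem sum_verticalStrips_castLE {σ : Type*} [Fintype σ] [DecidableEq σ] {L₁ L₂ : ℕ}
    (h : L₁ ≤ L₂) {f : ℕ → ℕ} (hf : ∀ n, L₁ ≤ n → f n = 0) (r m : ℕ)
    (hsupp : ∀ lam ∈ verticalStrips (fun i : Fin L₂ => f i) r m,
      ∀ i : Fin L₂, L₁ ≤ (i : ℕ) → lam i = 0) :
    ∑ lam ∈ verticalStrips (fun i : Fin L₂ => f i) r m, jacobiTrudi σ R (fun i => (lam i : ℤ)) =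
      ∑ lam ∈ verticalStrips (fun i : Fin L₁ => f i) r m,
        jacobiTrudi σ R (fun i => (lam i : ℤ)) := by
  refine sum_nbij' (fun lam i => lam (Fin.castLE h i)) (fun lam i => zeroExtend lam i)
    (fun lam hlam => castLE_mem_verticalStrips h hlam (hsupp lam hlam))
    (fun lam hlam => zeroExtend_mem_verticalStrips h hf hlam) (fun lam hlam => ?_)
    (fun lam _ => _root_.funext (zeroExtend_val lam))
    (fun lam hlam => jacobiTrudi_castLE h _ fun i hi => by simp [hsupp lam hlam i hi])
  funext i
  by_cases hi : (i : ℕ) < L₁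
  · simp [zeroExtend, hi]
  · rw [zeroExtend_of_le _ (not_lt.mp hi), hsupp lam hlam i (not_lt.mp hi)]

theorem esymm_mul_jacobiTrudi_eq_sum_verticalStrips {m : ℕ} (r : ℕ) {ν : Fin m → ℕ}
    (hν : Antitone ν) :
    esymm (Fin m) R r * jacobiTrudi (Fin m) R (fun i => (ν i : ℤ)) =
      ∑ lam ∈ verticalStrips ν r m, jacobiTrudi (Fin m) R (fun i => (lam i : ℤ)) := by
  rw [verticalStrips_eq_image, sum_image fun _ _ _ _ h => addOnes_injective ν h,
    esymm_mul_jacobiTrudi r hν]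
  congr 1
  exact filter_congr fun T _ =>
    (and_iff_left fun (i : Fin m) hi => absurd i.isLt (by omega)).symm

theorem esymm_mul_jacobiTrudi_eq_sum_verticalStrips_of_le {f : ℕ → ℕ} (hf : Antitone f)
    {l m r L : ℕ} (hl : ∀ n, l ≤ n → f n = 0) (hm : ∀ n, m ≤ n → f n = 0) (hL : l + r ≤ L) :
    esymm (Fin m) R r * jacobiTrudi (Fin m) R (fun i : Fin l => (f i : ℤ)) =
      ∑ lam ∈ verticalStrips (fun i : Fin L => f i) r m,
        jacobiTrudi (Fin m) R (fun i => (lam i : ℤ)) := by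
  have hmN : m ≤ m + L := Nat.le_add_right m L
  have hLN : L ≤ m + L := Nat.le_add_left L m
  rw [← jacobiTrudi_restrict_of_le (show l ≤ m + L by omega) f hl,
    jacobiTrudi_restrict_of_le hmN f hm,
    esymm_mul_jacobiTrudi_eq_sum_verticalStrips (ν := fun i : Fin m => f i) r
      (hf.comp_monotone Fin.val_strictMono.monotone),
    ← sum_verticalStrips_castLE hmN hm r m fun lam hlam => (mem_filter.mp hlam).2.2.2.2,
    sum_verticalStrips_castLE hLN (fun n hn => hl n (by omega)) r m fun lam hlam i hi =>
      eq_zero_of_mem_verticalStrips (fun i hi => hl i hi) hlam i (by omega)]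

end MvPolynomial

/-- `μ'` is `μ` padded by zeros to length `l + r`: every `λ` in the sum has at most `l + r`
parts and satisfies `λ_i ≤ μ_i + 1`, so the finite index set captures all of them. -/
theorem dual_pieri_rule (R : Type*) [CommRing R] (m l : ℕ)
    (μ : Fin l → ℕ) (hμ : Antitone μ) (r : ℕ)
    (μ' : Fin (l + r) → ℕ)
    (hμ'₁ : ∀ i : Fin (l + r), ∀ h : (i : ℕ) < l, μ' i = μ ⟨i, h⟩)
    (hμ'₂ : ∀ i : Fin (l + r), l ≤ (i : ℕ) → μ' i = 0) :
    (esymm (Fin m) R r) * jacobiTrudi (Fin m) R (fun i => (μ i : ℤ)) =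
      ∑ lam ∈ (Finset.Iic (fun i => μ' i + 1)).filter
          (fun lam : Fin (l + r) → ℕ => Antitone lam ∧
            IsVerticalStrip lam μ' ∧
            (∑ i, (lam i - μ' i)) = r ∧
            ∀ i : Fin (l + r), m ≤ (i : ℕ) → lam i = 0),
        jacobiTrudi (Fin m) R (fun i => (lam i : ℤ)) := by
  by_cases hdeg : ∃ i₀ : Fin l, m ≤ (i₀ : ℕ) ∧ 0 < μ i₀
  · obtain ⟨i₀, hi₀m, hpos⟩ := hdeg
    rw [jacobiTrudi_eq_zero_of_pos hμ i₀ (by simpa using hi₀m) hpos, mul_zero]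
    refine (sum_eq_zero fun lam hlam => ?_).symm
    obtain ⟨-, -, hstrip, -, hzero⟩ := mem_filter.mp hlam
    have hle := (hstrip ⟨i₀, by omega⟩).1
    have hμi₀ : μ' ⟨i₀, by omega⟩ = μ i₀ := hμ'₁ _ i₀.isLt
    have := hzero ⟨i₀, by omega⟩ hi₀m
    omega
  push Not at hdeg
  have hm : ∀ n, m ≤ n → zeroExtend μ n = 0 := fun n hn => by
    by_cases h : n < l
    · simpa [zeroExtend, h] using hdeg ⟨n, h⟩ hn
    · exact zeroExtend_of_le μ (not_lt.mp h)
  obtain rfl : μ' = fun i : Fin (l + r) => zeroExtend μ i := funext fun i => by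
    by_cases h : (i : ℕ) < l
    · rw [hμ'₁ i h, zeroExtend, dif_pos h]
    · rw [hμ'₂ i (not_lt.mp h), zeroExtend_of_le μ (not_lt.mp h)]
  have key := esymm_mul_jacobiTrudi_eq_sum_verticalStrips_of_le (R := R) (r := r)
    (antitone_zeroExtend hμ) (fun n => zeroExtend_of_le μ) hm le_rfl
  simp only [zeroExtend_val] at key
  exact key
end

section
/- Vertex operator identity Γ_{(t|X)} s_α = σ[tX] · s_α[X − 1/t], Laurent series form: let α = (α_1 ≥ ⋯ ≥ α_l > 0) be a partition. In the ring of formal Laurent series in t with coefficients in the polynomial ring in x_1, …, x_m, the following identity holds: Σ_{n ∈ ℤ} s_{(n, α_1, …, α_l)}(x) · t^n = ( Π_{i=1}^{m} (1 − t·x_i) )^{−1} · Σ_{k=0}^{l} (−1)^k t^{−k} ( Σ_μ s_μ(x) ), where the inner sum ranges over all partitions μ ⊆ α with α/μ a vertical strip of size k. (The left side is a well-defined Laurent series since s_{(n,α)} = 0 for n < −l; the factor Π (1 − t x_i)^{−1} is the power series σ[tX] = Σ_{a ≥ 0} h_a(x) t^a.) -/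
open MvPolynomial

open scoped Classical

/-!
Expanding the Jacobi–Trudi determinant of `(n, α)` along its first row gives
`s_{(n,α)} = Σ_c (-1)^c h_{n+c} M_c`, where `M_c` is the minor of the lower `l × (l+1)` block `Z`
with column `c` deleted. Multiplying `Z` by a unitriangular matrix shows
`Σ_c x^c M_c = det (Z_{i,j+1} + x Z_{i,j})`, and expanding the right side row by row identifies
`M_c` with the sum of the Jacobi–Trudi determinants of `α` with `c` of its rows lowered by one.
Those that are not partitions have two equal rows, and the others are exactly the `s_μ` with
`α/μ` a vertical strip of size `c`. Summing over `n` against `t^n` turns `h_{n+c}` into the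
series `σ[tX]` shifted by `t^{-c}`.
-/

open Finset

namespace Matrix

variable {A : Type*} [CommRing A]

theorem det_of_add_mul_eq_sum_subsets {n : Type*} [Fintype n] [DecidableEq n] (u v : n → n → A)
    (x : A) :
    (of fun i j => u i j + x * v i j).det =
      ∑ S : Finset n, x ^ #S * (of fun i j => if i ∈ S then v i j else u i j).det := by
  have hrows : (of fun i j => u i j + x * v i j) = (fun i => x • v i) + u := by
    ext i j
    simp [add_comm]
  change detRowAlternating _ = _
  rw [hrows, AlternatingMap.map_add_univ]
  refine sum_congr rfl fun S _ => ?_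
  have hpiece : of (S.piecewise (fun i => x • v i) u) =
      of fun i j => (if i ∈ S then x else 1) * if i ∈ S then v i j else u i j := by
    ext i j
    by_cases hi : i ∈ S <;> simp [hi]
  have hprod : ∏ i, (if i ∈ S then x else 1) = x ^ #S := by
    rw [prod_ite_mem, univ_inter, prod_const]
  change (of (S.piecewise (fun i => x • v i) u)).det = _
  rw [hpiece, ← hprod]
  exact det_mul_column _ (of fun i j => if i ∈ S then v i j else u i j)

theorem sum_pow_mul_det_submatrix_succAbove {l : ℕ} (Z : Matrix (Fin l) (Fin (l + 1)) A)
    (x : A) :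
    ∑ c : Fin (l + 1), x ^ (c : ℕ) * (Z.submatrix id c.succAbove).det =
      (of fun i j => Z i j.succ + x * Z i j.castSucc).det := by
  obtain ⟨N, hN_zero, hN_succ⟩ : ∃ N : Matrix (Fin (l + 1)) (Fin (l + 1)) A,
      (∀ c, N 0 c = (-x) ^ (c : ℕ)) ∧ ∀ i c, N i.succ c = Z i c :=
    ⟨of (Fin.cons (fun c => (-x) ^ (c : ℕ)) Z), fun _ => rfl, fun _ _ => rfl⟩
  -- `N * T` adds `x` times column `c` to column `c + 1` of `N`; this clears the first row of `N`
  -- except for its leading `1`, and turns the other rows into `Z i j.succ + x * Z i j.castSucc`.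
  let T : Matrix (Fin (l + 1)) (Fin (l + 1)) A :=
    1 + of fun c c' : Fin (l + 1) => if (c' : ℕ) = c + 1 then x else 0
  have hT : T.det = 1 := by
    rw [det_of_isUpperTriangular fun c c' (h : c' < c) => ?_]
    · exact prod_eq_one fun c _ => by simp [T]
    · have : (c' : ℕ) < c := h
      simp [T, h.ne', show (c' : ℕ) ≠ c + 1 by omega]
  have hNT_zero : ∀ i, (N * T) i 0 = N i 0 := fun i => by
    rw [Matrix.mul_add, Matrix.mul_one, add_apply, add_eq_left, mul_apply]
    simp
  have hNT_succ : ∀ i (d : Fin l), (N * T) i d.succ = N i d.succ + x * N i d.castSucc := by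
    intro i d
    rw [Matrix.mul_add, Matrix.mul_one, add_apply, mul_apply,
      sum_eq_single d.castSucc (fun c _ hc => ?_) (by simp)]
    · simp [mul_comm]
    · have : (d : ℕ) ≠ c := fun h => hc (Fin.ext h.symm)
      simp [this]
  calc ∑ c : Fin (l + 1), x ^ (c : ℕ) * (Z.submatrix id c.succAbove).det = N.det := by
        rw [det_succ_row_zero]
        refine sum_congr rfl fun c _ => ?_
        rw [hN_zero, ← mul_pow, neg_one_mul, neg_neg]
        congr 2
        ext i j
        simp [hN_succ]
    _ = (N * T).det := by rw [det_mul, hT, mul_one]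
    _ = (of fun i j => Z i j.succ + x * Z i j.castSucc).det := by
        rw [det_succ_row_zero, Fin.sum_univ_succ, sum_eq_zero fun d _ => ?_]
        · rw [hNT_zero, hN_zero, Fin.val_zero, pow_zero, pow_zero, one_mul, one_mul, add_zero]
          congr 1
          ext i j
          simp [hNT_succ, hN_succ]
        · rw [hNT_succ, hN_zero, hN_zero]
          simp [pow_succ]
          ring

theorem det_submatrix_succAbove_eq_sum_powersetCard {l : ℕ} (Z : Matrix (Fin l) (Fin (l + 1)) A)
    (k : Fin (l + 1)) :
    (Z.submatrix id k.succAbove).det =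
      ∑ S ∈ powersetCard k univ,
        (of fun i j => if i ∈ S then Z i j.castSucc else Z i j.succ).det := by
  have hC : ∀ M : Matrix (Fin l) (Fin l) A, (M.map Polynomial.C).det = Polynomial.C M.det :=
    fun M => (RingHom.map_det Polynomial.C M).symm
  have hrows : ∀ S : Finset (Fin l),
      (of fun i (j : Fin l) =>
        if i ∈ S then Z.map Polynomial.C i j.castSucc else Z.map Polynomial.C i j.succ) =
        (of fun i j => if i ∈ S then Z i j.castSucc else Z i j.succ).map Polynomial.C :=
    fun S => Matrix.ext fun i j => by by_cases hi : i ∈ S <;> simp [hi]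
  -- compare the coefficients of `X ^ k` in the case `x = X` over `A[X]`
  have h := (sum_pow_mul_det_submatrix_succAbove (Z.map Polynomial.C) Polynomial.X).trans
    (det_of_add_mul_eq_sum_subsets _ _ Polynomial.X)
  simp only [submatrix_map, hrows, hC, mul_comm (Polynomial.X ^ _)] at h
  have hcoeff := congrArg (Polynomial.coeff · k) h
  simp only [Polynomial.finsetSum_coeff, Polynomial.coeff_C_mul_X_pow, Fin.val_inj, sum_ite_eq,
    mem_univ, if_true] at hcoeff
  rw [hcoeff, powersetCard_eq_filter, powerset_univ, sum_filter]
  simp only [eq_comm]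

end Matrix

section VerticalStrip

variable {l : ℕ}

theorem Fin.exists_succ_eq_and_lt_of_not_antitone {β : Type*} [LinearOrder β] {f : Fin l → β}
    (h : ¬Antitone f) : ∃ a b : Fin l, (b : ℕ) = a + 1 ∧ f a < f b := by
  contrapose! h
  cases l with
  | zero => exact fun a => a.elim0
  | succ l => exact Fin.antitone_iff_succ_le.mpr fun i => h i.castSucc i.succ rfl

noncomputable def verticalStripsBelow (α : Fin l → ℕ) (k : ℕ) : Finset (Fin l → ℕ) :=
  (Iic α).filter fun μ => Antitone μ ∧ IsVerticalStrip α μ ∧ ∑ i, (α i - μ i) = k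

def lowerRows (α : Fin l → ℕ) (S : Finset (Fin l)) : Fin l → ℕ :=
  fun i => if i ∈ S then α i - 1 else α i

theorem lowerRows_filter_lt_eq {α μ : Fin l → ℕ} (hμ : IsVerticalStrip α μ) :
    lowerRows α (univ.filter fun i => μ i < α i) = μ := by
  funext i
  have := hμ i
  simp only [lowerRows, mem_filter, mem_univ, true_and]
  split_ifs <;> omega

theorem filter_lowerRows_lt_eq {α : Fin l → ℕ} (hpos : ∀ i, 0 < α i) (S : Finset (Fin l)) :
    (univ.filter fun i => lowerRows α S i < α i) = S := by
  ext i
  have := hpos i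
  rw [mem_filter]
  simp only [mem_univ, true_and, lowerRows]
  split_ifs <;> simp [*]

theorem sum_sub_lowerRows {α : Fin l → ℕ} (hpos : ∀ i, 0 < α i) (S : Finset (Fin l)) :
    ∑ i, (α i - lowerRows α S i) = #S := by
  calc ∑ i, (α i - lowerRows α S i) = ∑ i, if i ∈ S then 1 else 0 :=
        sum_congr rfl fun i _ => by
          have := hpos i
          simp only [lowerRows]
          split_ifs <;> omega
    _ = #S := by simp

theorem sum_antitone_lowerRows_eq_sum_verticalStripsBelow {M : Type*} [AddCommMonoid M]
    (f : (Fin l → ℕ) → M) {α : Fin l → ℕ} (hpos : ∀ i, 0 < α i) (k : ℕ) :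
    ∑ S ∈ (powersetCard k univ).filter (fun S => Antitone (lowerRows α S)), f (lowerRows α S) =
      ∑ μ ∈ verticalStripsBelow α k, f μ := by
  refine sum_nbij' (lowerRows α) (fun μ => univ.filter fun i => μ i < α i) ?_ ?_
    (fun S _ => filter_lowerRows_lt_eq hpos S) ?_ (fun _ _ => rfl)
  · intro S hS
    simp only [verticalStripsBelow, mem_filter, mem_powersetCard, mem_Iic] at hS ⊢
    refine ⟨fun i => ?_, hS.2, fun i => ?_, hS.1.2 ▸ sum_sub_lowerRows hpos S⟩ <;>
      · have := hpos i
        simp only [lowerRows]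
        split_ifs <;> omega
  · intro μ hμ
    simp only [verticalStripsBelow, mem_filter, mem_powersetCard, mem_Iic] at hμ ⊢
    obtain ⟨-, hanti, hstrip, hsum⟩ := hμ
    refine ⟨⟨subset_univ _, ?_⟩, (lowerRows_filter_lt_eq hstrip).symm ▸ hanti⟩
    rw [← hsum, card_filter]
    refine sum_congr rfl fun i _ => ?_
    have := hstrip i
    split_ifs <;> omega
  · intro μ hμ
    rw [verticalStripsBelow, mem_filter] at hμ
    exact lowerRows_filter_lt_eq hμ.2.2.1

end VerticalStrip

section JacobiTrudi

variable (σ : Type*) [Fintype σ] [DecidableEq σ] (R : Type*) [CommRing R] {l : ℕ}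

theorem jacobiTrudi_cons (n : ℤ) (α : Fin l → ℤ) :
    jacobiTrudi σ R (Fin.cons n α) = ∑ k ∈ range (l + 1), (-1) ^ k * hInt σ R (n + k) *
      ∑ S ∈ powersetCard k univ, jacobiTrudi σ R (fun i => α i - if i ∈ S then 1 else 0) := by
  rw [jacobiTrudi, Matrix.det_succ_row_zero, ← Fin.sum_univ_eq_sum_range]
  refine sum_congr rfl fun c _ => ?_
  rw [Matrix.of_apply, Fin.cons_zero, Fin.val_zero, Nat.cast_zero, sub_zero]
  congr 1
  have hminor := Matrix.det_submatrix_succAbove_eq_sum_powersetCard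
    ((Matrix.of fun i j : Fin (l + 1) =>
      hInt σ R ((Fin.cons n α : Fin (l + 1) → ℤ) i + (j : ℕ) - (i : ℕ))).submatrix Fin.succ id) c
  refine hminor.trans (sum_congr rfl fun S _ => congrArg Matrix.det (Matrix.ext fun i j => ?_))
  by_cases hi : i ∈ S <;>
    simp only [hi, if_true, if_false, Matrix.of_apply, Matrix.submatrix_apply, id, Fin.cons_succ,
      Fin.val_succ, Fin.val_castSucc] <;>
    congr 1 <;> push_cast <;> ring

theorem jacobiTrudi_eq_zero_of_succ_eq (α : Fin l → ℤ) {a b : Fin l}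
    (hab : (b : ℕ) = a + 1) (h : α b = α a + 1) : jacobiTrudi σ R α = 0 := by
  refine Matrix.det_zero_of_row_eq (i := a) (j := b) (fun hab' => by omega) (funext fun j => ?_)
  simp only [Matrix.of_apply, hab, h]
  congr 1
  push_cast
  ring

theorem jacobiTrudi_lowerRows_eq_zero {α : Fin l → ℕ} (hα : Antitone α) {S : Finset (Fin l)}
    (h : ¬Antitone (lowerRows α S)) : jacobiTrudi σ R (fun i => (lowerRows α S i : ℤ)) = 0 := by
  obtain ⟨a, b, hab, hlt⟩ := Fin.exists_succ_eq_and_lt_of_not_antitone h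
  have hαab : α b ≤ α a := hα (Fin.le_def.mpr (by omega))
  refine jacobiTrudi_eq_zero_of_succ_eq σ R _ hab ?_
  simp only [lowerRows] at hlt ⊢
  split_ifs at hlt ⊢ <;> omega

theorem sum_powersetCard_jacobiTrudi_eq_sum_verticalStripsBelow {α : Fin l → ℕ} (hα : Antitone α)
    (hpos : ∀ i, 0 < α i) (k : ℕ) :
    ∑ S ∈ powersetCard k univ, jacobiTrudi σ R (fun i => (α i : ℤ) - if i ∈ S then 1 else 0) =
      ∑ μ ∈ verticalStripsBelow α k, jacobiTrudi σ R (fun i => (μ i : ℤ)) := by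
  have hcast : ∀ S : Finset (Fin l),
      (fun i => (α i : ℤ) - if i ∈ S then 1 else 0) = fun i => (lowerRows α S i : ℤ) := by
    intro S
    funext i
    have := hpos i
    simp only [lowerRows]
    split_ifs <;> omega
  simp only [hcast]
  rw [← sum_filter_of_ne fun S _ h => not_not.mp (mt (jacobiTrudi_lowerRows_eq_zero σ R hα) h)]
  exact sum_antitone_lowerRows_eq_sum_verticalStripsBelow
    (fun μ => jacobiTrudi σ R fun i => (μ i : ℤ)) hpos k

theorem jacobiTrudi_cons_eq_sum_verticalStripsBelow {α : Fin l → ℕ} (hα : Antitone α)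
    (hpos : ∀ i, 0 < α i) (n : ℤ) :
    jacobiTrudi σ R (Fin.cons n fun i => (α i : ℤ)) =
      ∑ k ∈ range (l + 1), hInt σ R (n + k) *
        ((-1) ^ k * ∑ μ ∈ verticalStripsBelow α k, jacobiTrudi σ R (fun i => (μ i : ℤ))) := by
  rw [jacobiTrudi_cons]
  refine sum_congr rfl fun k _ => ?_
  rw [sum_powersetCard_jacobiTrudi_eq_sum_verticalStripsBelow σ R hα hpos, mul_left_comm, mul_assoc]

theorem coeff_hsymm_mul_C_mul_X_pow (b : MvPolynomial σ R) (d j : ℕ) :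
    PowerSeries.coeff j
        (PowerSeries.mk (fun a => hsymm σ R a) * (PowerSeries.C b * PowerSeries.X ^ d)) =
      hInt σ R (j - d) * b := by
  rw [← mul_assoc, PowerSeries.coeff_mul_X_pow', hInt]
  by_cases h : d ≤ j
  · rw [if_pos h, if_pos (by omega), PowerSeries.coeff_mul_C, PowerSeries.coeff_mk]
    congr
    omega
  · rw [if_neg h, if_neg (by omega), zero_mul]

end JacobiTrudi

theorem HahnSeries.single_mul_ofPowerSeries_C_mul_X_pow {A : Type*} [Semiring A] (g : ℤ)
    (a b : A) (d : ℕ) :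
    single g a * ofPowerSeries ℤ A (PowerSeries.C b * PowerSeries.X ^ d) =
      single (g + d) (a * b) := by
  rw [map_mul, ofPowerSeries_C, ofPowerSeries_X_pow, C_apply, single_mul_single, single_mul_single,
    zero_add, mul_one]

/-- **Vertex operator identity `Γ_{(t|X)} s_α = σ[tX] ⬝ s_α[X - 1/t]`, Laurent series
form.**  For a partition `α` with `l` positive parts, in the ring of formal Laurent
series in `t` over the polynomial ring,
`Σ_{n ∈ ℤ} s_{(n,α)}(x) t^n
  = (Σ_{a ≥ 0} h_a(x) t^a) ⬝ Σ_{k=0}^{l} (-1)^k t^{-k} (Σ_μ s_μ(x))`,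
where the inner sum ranges over all partitions `μ ⊆ α` with `α/μ` a vertical strip of
size `k`.  The left-hand side is encoded as `t^{-l}` times the power series whose `j`-th
coefficient is `s_{(j - l, α)}` (this represents `Σ_{n ∈ ℤ} s_{(n,α)} t^n`, since
`s_{(n,α)} = 0` for `n < -l`), and the factor `Π_i (1 - t x_i)^{-1} = σ[tX]` is the
power series `Σ_{a ≥ 0} h_a(x) t^a`. -/
theorem vertex_operator_laurent_series (R : Type*) [CommRing R] (m l : ℕ)
    (α : Fin l → ℕ) (hα : Antitone α) (hpos : ∀ i, 0 < α i) :
    (HahnSeries.single (-(l : ℤ)) (1 : MvPolynomial (Fin m) R)) *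
        HahnSeries.ofPowerSeries ℤ (MvPolynomial (Fin m) R)
          (PowerSeries.mk fun j : ℕ =>
            jacobiTrudi (Fin m) R (Fin.cons ((j : ℤ) - (l : ℤ)) (fun i => (α i : ℤ)))) =
      HahnSeries.ofPowerSeries ℤ (MvPolynomial (Fin m) R)
          (PowerSeries.mk fun a : ℕ => hsymm (Fin m) R a) *
        ∑ k ∈ Finset.range (l + 1),
          HahnSeries.single (-(k : ℤ))
            (((-1 : MvPolynomial (Fin m) R) ^ k) *
              ∑ μ ∈ (Finset.Iic α).filter
                  (fun μ => Antitone μ ∧ IsVerticalStrip α μ ∧ (∑ i, (α i - μ i)) = k),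
                jacobiTrudi (Fin m) R (fun i => (μ i : ℤ))) := by
  set b : ℕ → MvPolynomial (Fin m) R := fun k =>
    (-1) ^ k * ∑ μ ∈ verticalStripsBelow α k, jacobiTrudi (Fin m) R (fun i => (μ i : ℤ))
  have hseries : (PowerSeries.mk fun j : ℕ =>
        jacobiTrudi (Fin m) R (Fin.cons ((j : ℤ) - l) fun i => (α i : ℤ))) =
      PowerSeries.mk (fun a => hsymm (Fin m) R a) *
        ∑ k ∈ range (l + 1), PowerSeries.C (b k) * PowerSeries.X ^ (l - k) := by
    refine PowerSeries.ext fun j => ?_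
    rw [PowerSeries.coeff_mk, jacobiTrudi_cons_eq_sum_verticalStripsBelow _ R hα hpos, mul_sum,
      map_sum]
    refine Finset.sum_congr rfl fun k hk => ?_
    rw [coeff_hsymm_mul_C_mul_X_pow, Nat.cast_sub (Nat.le_of_lt_succ (mem_range.mp hk))]
    congr 2
    omega
  rw [hseries, map_mul, mul_left_comm, map_sum, mul_sum]
  congr 1
  refine sum_congr rfl fun k hk => ?_
  rw [HahnSeries.single_mul_ofPowerSeries_C_mul_X_pow, one_mul,
    Nat.cast_sub (Nat.le_of_lt_succ (mem_range.mp hk)), ← add_sub_assoc, neg_add_cancel, zero_sub]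
  rfl
end
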